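/- Let A be a two-sided skew brace. Then for all a,b ∈ A and every c in the center Z(A,+) of the additive group: c*(a+b) = c*a + c*b, (a+b)*c = a*c + b*c, and (a*b)*c = a*(b*c). -/
import Mathlib


/-- A skew (left) brace: a type with two group structures `(A,+)` and `(A,∘)`
(the latter written multiplicatively) sharing the same identity, satisfying the
left skew brace law `a ∘ (b + c) = a ∘ b − a + a ∘ c`. -/
class SkewBrace (A : Type*) extends AddGroup A, Group A where
  mul_add_eq : ∀ a b c : A, a * (b + c) = a * b - a + a * c

namespace SkewBrace

variable {A : Type*}

/-- A skew brace is two-sided if `(a + b) ∘ c = a ∘ c − c + b ∘ c`. -/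
def IsTwoSided (A : Type*) [SkewBrace A] : Prop :=
  ∀ a b c : A, (a + b) * c = a * c - c + b * c

/-- `a * b = −a + a∘b − b`. -/
def bstar [SkewBrace A] (a b : A) : A := -a + a * b - b

/-- the star operation of the opposite skew brace: `a *ₒₚ b = −b + a∘b − a`. -/
def bstarOp [SkewBrace A] (a b : A) : A := -b + a * b - a

/-- `X * Y`: the additive subgroup generated by all `x * y`, `x ∈ X`, `y ∈ Y`. -/
def starSet [SkewBrace A] (X Y : Set A) : AddSubgroup A :=
  AddSubgroup.closure {z | ∃ x ∈ X, ∃ y ∈ Y, z = bstar x y}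

/-- `A² = A * A`. -/
def sq (A : Type*) [SkewBrace A] : AddSubgroup A := starSet Set.univ Set.univ

/-- `A²ₒₚ`, the additive subgroup generated by all `a *ₒₚ b`. -/
def sqOp (A : Type*) [SkewBrace A] : AddSubgroup A :=
  AddSubgroup.closure {z | ∃ a b : A, z = bstarOp a b}

/-- A skew brace is weakly trivial if `A² ∩ A²ₒₚ = {0}`. -/
def IsWeaklyTrivial (A : Type*) [SkewBrace A] : Prop := sq A ⊓ sqOp A = ⊥

/-- An ideal of a skew brace: an additive subgroup, normal in `(A,+)` and in
`(A,∘)`, and invariant under all `λ_a : b ↦ −a + a∘b`. -/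
structure IsIdeal [SkewBrace A] (I : AddSubgroup A) : Prop where
  add_conj : ∀ a : A, ∀ x ∈ I, a + x - a ∈ I
  mul_conj : ∀ a : A, ∀ x ∈ I, a * x * a⁻¹ ∈ I
  lambda_mem : ∀ a : A, ∀ x ∈ I, -a + a * x ∈ I

/-- The left series `A¹ = A`, `Aⁿ⁺¹ = A * Aⁿ`; `leftSeries A n` is `Aⁿ⁺¹`. -/
def leftSeries (A : Type*) [SkewBrace A] : ℕ → AddSubgroup A
  | 0 => ⊤
  | n + 1 => starSet Set.univ (leftSeries A n : Set A)

/-- The right series `A⁽¹⁾ = A`, `A⁽ⁿ⁺¹⁾ = A⁽ⁿ⁾ * A`; `rightSeries A n` is `A⁽ⁿ⁺¹⁾`. -/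
def rightSeries (A : Type*) [SkewBrace A] : ℕ → AddSubgroup A
  | 0 => ⊤
  | n + 1 => starSet (rightSeries A n : Set A) Set.univ

/-- A skew brace is left nilpotent if its left series reaches `{0}`. -/
def IsLeftNilpotent (A : Type*) [SkewBrace A] : Prop := ∃ n, leftSeries A n = ⊥

/-- A skew brace is right nilpotent if its right series reaches `{0}`. -/
def IsRightNilpotent (A : Type*) [SkewBrace A] : Prop := ∃ n, rightSeries A n = ⊥

/-- The series `A⁽¹⁾ = A`, `A^[n+1]` generated by the union of `A^[i] * A^[n+1-i]`;
`strongSeries A n` is `A^[n+1]`. -/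
def strongSeries (A : Type*) [SkewBrace A] : ℕ → AddSubgroup A
  | 0 => ⊤
  | n + 1 => ⨆ i : Fin (n + 1),
      starSet (strongSeries A i.val : Set A) (strongSeries A (n - i.val) : Set A)
  decreasing_by
  · exact i.isLt
  · have := i.isLt; omega

/-- A skew brace is strongly nilpotent if the series `A^[n]` reaches `{0}`. -/
def IsStronglyNilpotent (A : Type*) [SkewBrace A] : Prop := ∃ n, strongSeries A n = ⊥

/-- The derived series of a skew brace: `A₁ = A`, `Aₙ₊₁ = Aₙ * Aₙ`;
`derivedSeriesBrace A n` is `Aₙ₊₁`. -/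
def derivedSeriesBrace (A : Type*) [SkewBrace A] : ℕ → AddSubgroup A
  | 0 => ⊤
  | n + 1 => starSet (derivedSeriesBrace A n : Set A) (derivedSeriesBrace A n : Set A)

/-- A skew brace is soluble if its derived series reaches `{0}`. -/
def IsSolubleBrace (A : Type*) [SkewBrace A] : Prop := ∃ n, derivedSeriesBrace A n = ⊥

end SkewBrace


namespace SkewBrace

variable {A : Type*} [SkewBrace A]

lemma ccomm {z : A} (hz : z ∈ AddSubgroup.center A) (g : A) : g + z = z + g :=
  (AddSubgroup.mem_center_iff.mp hz g)

lemma cswap {z : A} (hz : z ∈ AddSubgroup.center A) (g r : A) :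
    g + (z + r) = z + (g + r) := by
  rw [← add_assoc, ccomm hz g, add_assoc]

lemma mul_zero' (a : A) : a * (0 : A) = a := by
  have h1 : a * (0:A) = a * 0 - a + a * 0 := by
    simpa using mul_add_eq a 0 0
  rw [sub_eq_add_neg, add_assoc] at h1
  have h2 : -a + a * (0:A) = 0 := (left_eq_add.mp h1)
  exact (neg_add_eq_zero.mp h2).symm

lemma zero_eq_one : (0 : A) = 1 := by
  have := mul_zero' (1 : A); rwa [one_mul] at this

lemma mul_eq (a b : A) : a * b = a + (bstar a b + b) := by
  simp [bstar, sub_eq_add_neg, add_assoc]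

lemma lam_central (a c : A) (hc : c ∈ AddSubgroup.center A) :
    -a + a * c ∈ AddSubgroup.center A := by
  rw [AddSubgroup.mem_center_iff]
  intro x
  set b := a⁻¹ * (a + x) with hb
  have hab : a * b = a + x := by rw [hb, mul_inv_cancel_left]
  have hx : x = -a + a * b := by rw [hab, neg_add_cancel_left]
  have key : a * b - a + a * c = a * c - a + a * b := by
    rw [← mul_add_eq, ← mul_add_eq, ccomm hc b]
  calc x + (-a + a * c) = -a + (a * b - a + a * c) := by
        rw [hx]; simp [sub_eq_add_neg, add_assoc]
    _ = -a + (a * c - a + a * b) := by rw [key]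
    _ = (-a + a * c) + x := by rw [hx]; simp [sub_eq_add_neg, add_assoc]

lemma rho_key (h : IsTwoSided A) (a c : A) (hc : c ∈ AddSubgroup.center A) :
    ∀ b : A, b * a - a + c * a = c * a - a + b * a := by
  intro b
  rw [← h, ← h, ccomm hc b]

lemma rho_comm (h : IsTwoSided A) (a c : A) (hc : c ∈ AddSubgroup.center A) :
    -a + c * a = c * a - a := by
  have := rho_key h a c hc a⁻¹
  rw [inv_mul_cancel, ← zero_eq_one] at this
  simpa using this

lemma rho_central (h : IsTwoSided A) (a c : A) (hc : c ∈ AddSubgroup.center A) :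
    -a + c * a ∈ AddSubgroup.center A := by
  rw [AddSubgroup.mem_center_iff]
  intro x
  have := rho_key h a c hc (x * a⁻¹)
  rw [inv_mul_cancel_right] at this
  rw [sub_eq_add_neg, add_assoc] at this
  rw [this, rho_comm h a c hc, sub_eq_add_neg]

lemma bstar_central_right (a c : A) (hc : c ∈ AddSubgroup.center A) :
    bstar a c ∈ AddSubgroup.center A := by
  have : bstar a c = (-a + a * c) + (-c) := by
    rw [bstar, sub_eq_add_neg, add_assoc]
  rw [this]
  exact AddSubgroup.add_mem _ (lam_central a c hc) (AddSubgroup.neg_mem _ hc)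

lemma bstar_central_left (h : IsTwoSided A) (a c : A) (hc : c ∈ AddSubgroup.center A) :
    bstar c a ∈ AddSubgroup.center A := by
  have : bstar c a = (-c) + (-a + c * a) := by
    rw [bstar, sub_eq_add_neg, add_assoc]
    congr 1
    rw [rho_comm h a c hc, sub_eq_add_neg]
  rw [this]
  exact AddSubgroup.add_mem _ (AddSubgroup.neg_mem _ hc) (rho_central h a c hc)

lemma star_add_right' (h : IsTwoSided A) (a b c : A) (hc : c ∈ AddSubgroup.center A) :
    bstar (a + b) c = bstar a c + bstar b c := by
  have hz1 : -a + (a * c + -c) ∈ AddSubgroup.center A := by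
    have := bstar_central_right a c hc
    simpa [bstar, sub_eq_add_neg, add_assoc] using this
  rw [bstar, bstar, bstar, h]
  simp only [sub_eq_add_neg, neg_add_rev, add_assoc]
  have e1 : ∀ X : A, -a + (a*c + (-c + X)) = (-a + (a*c + -c)) + X := by
    intro X; simp only [add_assoc]
  rw [e1, e1]
  exact cswap hz1 _ _

lemma star_add_left' (h : IsTwoSided A) (a b c : A) (hc : c ∈ AddSubgroup.center A) :
    bstar c (a + b) = bstar c a + bstar c b := by
  have hz : -c + (c * b + -b) ∈ AddSubgroup.center A := by
    have := bstar_central_left h b c hc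
    simpa [bstar, sub_eq_add_neg, add_assoc] using this
  rw [bstar, bstar, bstar, mul_add_eq]
  simp only [sub_eq_add_neg, neg_add_rev, add_assoc]
  congr 2
  have e1 : -c + (c*b + (-b + -a)) = (-c + (c*b + -b)) + -a := by
    simp only [add_assoc]
  rw [e1]
  exact (ccomm hz (-a)).symm

lemma starII (a b c : A)
    (hs : bstar b c ∈ AddSubgroup.center A)
    (hd : bstar (a * b) c ∈ AddSubgroup.center A) :
    bstar a (b * c) = bstar a b + (bstar (a * b) c + -(bstar b c)) := by
  set s := bstar b c with hsdef
  set d := bstar (a * b) c with hddef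
  have h2 : b * c = b + (s + c) := mul_eq b c
  have h3 : a * b * c = a * b + (d + c) := mul_eq (a*b) c
  show -a + (a * (b * c)) - (b * c) = (-a + a * b - b) + (d + -s)
  rw [← mul_assoc, h3, h2]
  simp only [sub_eq_add_neg, neg_add_rev, add_assoc, add_neg_cancel_left, add_right_inj]
  rw [← add_assoc]
  exact (ccomm (AddSubgroup.add_mem _ hd (AddSubgroup.neg_mem _ hs)) (-b)).symm

lemma starI (a b c : A) (hc : c ∈ AddSubgroup.center A) :
    bstar a (b * c) = bstar a b + (bstar a (bstar b c) + bstar a c) := by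
  have hs : bstar b c ∈ AddSubgroup.center A := bstar_central_right b c hc
  have hv : -a + (a * c + -c) ∈ AddSubgroup.center A := by
    rw [← add_assoc]
    exact AddSubgroup.add_mem _ (lam_central a c hc) (AddSubgroup.neg_mem _ hc)
  have hu : -a + (a * (bstar b c) + -(bstar b c)) ∈ AddSubgroup.center A := by
    rw [← add_assoc]
    exact AddSubgroup.add_mem _ (lam_central a _ hs) (AddSubgroup.neg_mem _ hs)
  set s := bstar b c with hsdef
  have h2 : b * c = b + (s + c) := mul_eq b c
  show -a + (a * (b * c)) - (b * c) =
    (-a + a * b - b) + ((-a + a * s - s) + (-a + a * c - c))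
  rw [h2, mul_add_eq a b (s + c), mul_add_eq a s c]
  simp only [sub_eq_add_neg, neg_add_rev, add_assoc, add_right_inj]
  have e1 : ∀ X : A, -a + (a*c + (-c + X)) = (-a + (a*c + -c)) + X := by
    intro X; simp only [add_assoc]
  have e2 : -a + (a*s + (-s + -b)) = (-a + (a*s + -s)) + -b := by
    simp only [add_assoc]
  have e3 : -a + (a*s + (-s + (-a + (a*c + -c)))) =
      (-a + (a*s + -s)) + (-a + (a*c + -c)) := by simp only [add_assoc]
  rw [e1, cswap hv, cswap hv, e2, e3, cswap hu, cswap hu]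
  rw [add_right_inj]
  exact (ccomm hv (-b)).symm

lemma star_mul_expand (h : IsTwoSided A) (a b c : A) (hc : c ∈ AddSubgroup.center A) :
    bstar (a * b) c = bstar a c + (bstar (bstar a b) c + bstar b c) := by
  conv_lhs => rw [mul_eq a b]
  rw [star_add_right' h a _ c hc, star_add_right' h _ b c hc]

end SkewBrace

open SkewBrace in
/-- In a two-sided skew brace, for `c` in the center of `(A,+)` the star operation
distributes over `+` on both sides and is associative: `c*(a+b) = c*a + c*b`,
`(a+b)*c = a*c + b*c` and `(a*b)*c = a*(b*c)`. -/
theorem star_center_distrib_assoc (A : Type*) [SkewBrace A] (h : IsTwoSided A)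
    (a b c : A) (hc : c ∈ AddSubgroup.center A) :
    bstar c (a + b) = bstar c a + bstar c b ∧
    bstar (a + b) c = bstar a c + bstar b c ∧
    bstar (bstar a b) c = bstar a (bstar b c) := by
  refine ⟨star_add_left' h a b c hc, star_add_right' h a b c hc, ?_⟩
  have hs : bstar b c ∈ AddSubgroup.center A := bstar_central_right b c hc
  have hQ : bstar a c ∈ AddSubgroup.center A := bstar_central_right a c hc
  have hd : bstar (a * b) c ∈ AddSubgroup.center A := bstar_central_right (a*b) c hc
  have hI := starI a b c hc
  have hII := starII a b c hs hd
  have h3 := star_mul_expand h a b c hc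
  have key : bstar a (bstar b c) + bstar a c = bstar (a * b) c + -(bstar b c) :=
    add_left_cancel (hI.symm.trans hII)
  rw [h3] at key
  have e : (bstar a c + (bstar (bstar a b) c + bstar b c)) + -(bstar b c)
      = bstar a c + bstar (bstar a b) c := by
    simp [add_assoc]
  rw [e] at key
  have key2 : bstar a (bstar b c) + bstar a c = bstar (bstar a b) c + bstar a c :=
    key.trans (ccomm hQ _).symm
  exact (add_right_cancel key2).symm
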